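/- arXiv:1403.2774 — 2 statements merged into one kernel-verified Lean document; each statement's English description precedes it below -/
import Mathlib

section
/- Let G = ℤ * ℤ/2ℤ be the free product with A generating the ℤ factor and V generating the ℤ/2ℤ factor (so V^2 = 1). If φ is an automorphism of G with φ(A) = A, then there exists an integer n such that φ(V) = A^n V A^{-n}. -/
/-!
Conjugating `v` by powers of `a` gives involutions `v_m = a^m v a^(-m)`, and `G = ℤ ∗ ℤ/2` splits as
`K ⋊ ℤ`, where `K` is the free product of copies of `ℤ/2` generated by the `v_m` and `ℤ` acts by
shifting indices. Every involution of `G` lies in `K`, so `φ v = k` for some `k ∈ K`, and since `φ`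
fixes `a` it maps `v_m` to the shift of `k` by `m`. As `k² = 1`, the reduced word of `k` begins and
ends with the same letter, so substituting shifted copies of `k` for the letters of a reduced word
yields a reduced word again, with length multiplied by `|k|`. Since `v = v_0` lies in the image of
`φ`, this forces `|k| = 1`, that is `k = v_n`.
-/

open Monoid Multiplicative

def zmodPowersHom {M : Type*} [Monoid M] (n : ℕ) [NeZero n] (x : M) (hx : x ^ n = 1) :
    Multiplicative (ZMod n) →* M where
  toFun z := x ^ z.toAdd.val
  map_one' := by simp
  map_mul' a b := by simp only [toAdd_mul, ZMod.val_add, ← pow_eq_pow_mod _ hx, pow_add]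

theorem zmodPowersHom_ofAdd_one {M : Type*} [Monoid M] (n : ℕ) [NeZero n] (x : M)
    (hx : x ^ n = 1) : zmodPowersHom n x hx (ofAdd 1) = x := by
  change x ^ (1 : ZMod n).val = x
  rw [ZMod.val_one_eq_one_mod, ← pow_eq_pow_mod _ hx, pow_one]

theorem MonoidHom.ext_mzmod {M : Type*} [Monoid M] {n : ℕ} [NeZero n]
    {f g : Multiplicative (ZMod n) →* M} (h : f (ofAdd 1) = g (ofAdd 1)) : f = g := by
  refine MonoidHom.ext fun z => ?_
  have hz : z = ofAdd 1 ^ (toAdd z).val := by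
    rw [← ofAdd_nsmul, nsmul_one, ZMod.natCast_zmod_val, ofAdd_toAdd]
  rw [hz, map_pow, map_pow, h]

abbrev FreeProdC2 (ι : Type*) := CoprodI fun _ : ι => Multiplicative (ZMod 2)

namespace FreeProdC2

variable {ι : Type*} {M : Type*} [Monoid M]

def gen (i : ι) : FreeProdC2 ι := CoprodI.of (i := i) (ofAdd 1)

@[simp]
theorem gen_mul_self (i : ι) : gen i * gen i = 1 := by
  rw [gen, ← map_mul]
  exact map_one _

def lift (f : ι → M) (hf : ∀ i, f i * f i = 1) : FreeProdC2 ι →* M :=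
  CoprodI.lift fun i => zmodPowersHom 2 (f i) (by rw [sq, hf])

@[simp]
theorem lift_gen (f : ι → M) (hf : ∀ i, f i * f i = 1) (i : ι) : lift f hf (gen i) = f i := by
  rw [lift, gen, CoprodI.lift_of, zmodPowersHom_ofAdd_one]

theorem hom_ext {f g : FreeProdC2 ι →* M} (h : ∀ i, f (gen i) = g (gen i)) : f = g :=
  CoprodI.ext_hom _ _ fun i => MonoidHom.ext_mzmod (h i)

def reindex : Equiv.Perm ι →* MulAut (FreeProdC2 ι) where
  toFun σ := MonoidHom.toMulEquiv (lift (gen ∘ σ) fun _ => gen_mul_self _)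
    (lift (gen ∘ σ.symm) fun _ => gen_mul_self _) (hom_ext fun _ => by simp)
    (hom_ext fun _ => by simp)
  map_one' := MulEquiv.toMonoidHom_injective <| hom_ext fun _ => by simp
  map_mul' _ _ := MulEquiv.toMonoidHom_injective <| hom_ext fun _ => by simp

@[simp]
theorem reindex_gen (σ : Equiv.Perm ι) (i : ι) : reindex σ (gen i) = gen (σ i) :=
  lift_gen (gen ∘ σ) (fun _ => gen_mul_self _) i

def ofList (l : List ι) : FreeProdC2 ι := (l.map gen).prod

@[simp]
theorem ofList_nil : ofList ([] : List ι) = 1 := rfl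

@[simp]
theorem ofList_cons (i : ι) (l : List ι) : ofList (i :: l) = gen i * ofList l := by
  simp [ofList]

@[simp]
theorem ofList_append (l₁ l₂ : List ι) : ofList (l₁ ++ l₂) = ofList l₁ * ofList l₂ := by
  simp [ofList]

theorem ofList_singleton (i : ι) : ofList [i] = gen i := by simp

def toWord (l : List ι) (hl : l.IsChain (· ≠ ·)) :
    CoprodI.Word fun _ : ι => Multiplicative (ZMod 2) where
  toList := l.map fun i => ⟨i, ofAdd 1⟩
  ne_one := by
    simp only [List.mem_map]
    rintro _ ⟨i, -, rfl⟩
    exact (by decide : (ofAdd 1 : Multiplicative (ZMod 2)) ≠ 1)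
  chain_ne := List.isChain_map _ |>.2 hl

theorem toWord_prod (l : List ι) (hl : l.IsChain (· ≠ ·)) : (toWord l hl).prod = ofList l := by
  simp only [CoprodI.Word.prod, toWord, ofList, List.map_map]
  rfl

section Words

variable [DecidableEq ι]

theorem exists_isChain_ofList_eq (g : FreeProdC2 ι) :
    ∃ l : List ι, l.IsChain (· ≠ ·) ∧ ofList l = g := by
  set w := CoprodI.Word.equiv g
  have hl : (w.toList.map Sigma.fst).IsChain (· ≠ ·) := List.isChain_map _ |>.2 w.chain_ne
  refine ⟨_, hl, ?_⟩
  have hw : toWord _ hl = w := by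
    refine CoprodI.Word.ext ?_
    simp only [toWord, List.map_map]
    conv_rhs => rw [← List.map_id w.toList]
    refine List.map_congr_left fun p hp => ?_
    have hC2 : ∀ z : Multiplicative (ZMod 2), z ≠ 1 → z = ofAdd 1 := by decide
    exact Sigma.ext rfl (heq_of_eq (hC2 _ (w.ne_one p hp)).symm)
  rw [← toWord_prod _ hl, hw]
  exact CoprodI.Word.equiv.symm_apply_apply g

theorem ofList_injOn : Set.InjOn (ofList (ι := ι)) {l | l.IsChain (· ≠ ·)} := by
  intro l hl l' hl' h
  rw [← toWord_prod l hl, ← toWord_prod l' hl'] at h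
  have := congrArg CoprodI.Word.toList (CoprodI.Word.equiv.symm.injective h)
  exact List.map_injective_iff.2 (fun i j h => congrArg Sigma.fst h) this

theorem head?_eq_getLast?_of_ofList_mul_self {l : List ι} (hl : l.IsChain (· ≠ ·))
    (h : ofList l * ofList l = 1) : l.head? = l.getLast? := by
  by_contra hne
  -- otherwise `l ++ l` would be a reduced word for `1`
  have hll : (l ++ l).IsChain (· ≠ ·) := by
    refine hl.append hl fun x hx y hy => ?_
    rintro rfl
    exact hne (by rw [Option.mem_def] at hx hy; rw [hx, hy])
  have : l ++ l = [] := ofList_injOn hll List.isChain_nil (by simpa using h)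
  simp_all

end Words

def shift : Multiplicative ℤ →* MulAut (FreeProdC2 ℤ) :=
  reindex.comp (MulAction.toPermHom (Multiplicative ℤ) ℤ)

@[simp]
theorem shift_gen (m i : ℤ) : shift (ofAdd m) (gen i) = gen (m + i) :=
  reindex_gen _ i

theorem shift_ofList (m : ℤ) (l : List ℤ) :
    shift (ofAdd m) (ofList l) = ofList (l.map (m + ·)) := by
  induction l with
  | nil => simp
  | cons i l ih => simp [ih]

def orbitHom (k : FreeProdC2 ℤ) (hk : k * k = 1) : FreeProdC2 ℤ →* FreeProdC2 ℤ :=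
  lift (fun m => shift (ofAdd m) k) fun m => by rw [← map_mul, hk, map_one]

@[simp]
theorem orbitHom_gen (k : FreeProdC2 ℤ) (hk : k * k = 1) (m : ℤ) :
    orbitHom k hk (gen m) = shift (ofAdd m) k :=
  lift_gen _ _ m

theorem orbitHom_ofList (lk : List ℤ) (hk : ofList lk * ofList lk = 1) (l : List ℤ) :
    orbitHom (ofList lk) hk (ofList l) = ofList (l.flatMap fun m => lk.map (m + ·)) := by
  induction l with
  | nil => simp
  | cons m l ih => simp [ih, shift_ofList]

theorem isChain_flatMap_map_add {lk : List ℤ} (hlk : lk.IsChain (· ≠ ·))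
    (hends : lk.head? = lk.getLast?) {l : List ℤ} (hl : l.IsChain (· ≠ ·)) :
    (l.flatMap fun m => lk.map (m + ·)).IsChain (· ≠ ·) := by
  induction l with
  | nil => exact List.isChain_nil
  | cons m l ih =>
    rw [List.flatMap_cons]
    refine (List.isChain_map _ |>.2 (hlk.imp fun h => by omega)).append (ih hl.tail) ?_
    intro x hx y hy
    rcases l with _ | ⟨m', l⟩
    · simp at hy
    obtain ⟨a, ha, rfl⟩ := Option.mem_map.1 (List.getLast?_map ▸ hx)
    rw [← hends, Option.mem_def] at ha
    simp only [List.flatMap_cons, List.head?_append, List.head?_map, ha, Option.map_some,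
      Option.some_or, Option.mem_def, Option.some.injEq] at hy
    have hmm' : m ≠ m' := (List.isChain_cons_cons.1 hl).1
    omega

theorem exists_eq_gen_of_orbitHom_eq_gen (k : FreeProdC2 ℤ) (hk : k * k = 1) {y : FreeProdC2 ℤ}
    {j : ℤ} (hy : orbitHom k hk y = gen j) : ∃ n, k = gen n := by
  obtain ⟨lk, hlk, rfl⟩ := exists_isChain_ofList_eq k
  obtain ⟨l, hl, rfl⟩ := exists_isChain_ofList_eq y
  have hflat : (l.flatMap fun m => lk.map (m + ·)) = [j] := by
    refine ofList_injOn (isChain_flatMap_map_add hlk ?_ hl) (List.isChain_singleton j) ?_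
    · exact head?_eq_getLast?_of_ofList_mul_self hlk hk
    · rw [← orbitHom_ofList lk hk, hy, ofList_singleton]
  have hlen : l.length * lk.length = 1 := by
    simpa [List.length_flatMap] using congrArg List.length hflat
  obtain ⟨n, rfl⟩ := List.length_eq_one_iff.1 (Nat.eq_one_of_mul_eq_one_left hlen)
  exact ⟨n, ofList_singleton n⟩

end FreeProdC2

namespace IntCoprodC2

open FreeProdC2 SemidirectProduct

abbrev G := Coprod (Multiplicative ℤ) (Multiplicative (ZMod 2))

def a : G := Coprod.inl (ofAdd 1)

def v : G := Coprod.inr (ofAdd 1)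

theorem v_mul_self : v * v = 1 := by
  rw [v, ← map_mul]
  exact map_one _

def conjV (m : ℤ) : G := a ^ m * v * a ^ (-m)

theorem conjV_mul_self (m : ℤ) : conjV m * conjV m = 1 := by
  calc conjV m * conjV m = a ^ m * (v * v) * a ^ (-m) := by simp only [conjV]; group
    _ = 1 := by rw [v_mul_self]; group

def conjHom : FreeProdC2 ℤ →* G := lift conjV conjV_mul_self

@[simp]
theorem conjHom_gen (m : ℤ) : conjHom (gen m) = conjV m := lift_gen _ _ m

theorem conjHom_comp_shift (z : Multiplicative ℤ) :
    conjHom.comp (shift z).toMonoidHom =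
      (MulAut.conj (zpowersHom G a z)).toMonoidHom.comp conjHom :=
  hom_ext fun i => by
    obtain ⟨m, rfl⟩ : ∃ m : ℤ, ofAdd m = z := ⟨toAdd z, rfl⟩
    simp only [MonoidHom.comp_apply, MulEquiv.coe_toMonoidHom, shift_gen, conjHom_gen,
      MulAut.conj_apply, zpowersHom_apply, toAdd_ofAdd, conjV]
    group

abbrev S := FreeProdC2 ℤ ⋊[shift] Multiplicative ℤ

def ofSemidirect : S →* G := SemidirectProduct.lift conjHom (zpowersHom G a) conjHom_comp_shift

def toSemidirect : G →* S :=
  Coprod.lift inr (zmodPowersHom 2 (inl (gen 0)) (by rw [sq, ← map_mul, gen_mul_self, map_one]))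

theorem ofSemidirect_toSemidirect (g : G) : ofSemidirect (toSemidirect g) = g := by
  suffices ofSemidirect.comp toSemidirect = MonoidHom.id G from DFunLike.congr_fun this g
  refine Coprod.hom_ext (MonoidHom.ext_mint ?_) (MonoidHom.ext_mzmod ?_)
  · simp [toSemidirect, ofSemidirect, a]
  · simp [toSemidirect, ofSemidirect, zmodPowersHom_ofAdd_one, conjV, v]

theorem toSemidirect_comp_conjHom : toSemidirect.comp conjHom = inl :=
  hom_ext fun m => by
    simp only [toSemidirect, conjV, a, v, MonoidHom.comp_apply, conjHom_gen, map_mul, map_zpow,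
      Coprod.lift_apply_inl, Coprod.lift_apply_inr, zmodPowersHom_ofAdd_one]
    have hpow (n : ℤ) : (ofAdd 1 : Multiplicative ℤ) ^ n = ofAdd n := by
      rw [← ofAdd_zsmul, zsmul_one, Int.cast_id]
    rw [← map_zpow inr, ← map_zpow inr, hpow, hpow, ofAdd_neg, ← inl_aut, shift_gen, add_zero]

theorem conjHom_injective : Function.Injective conjHom :=
  Function.Injective.of_comp (f := toSemidirect) <| by
    rw [← MonoidHom.coe_comp, toSemidirect_comp_conjHom]
    exact inl_injective

theorem exists_conjHom_eq_of_mul_self {g : G} (hg : g * g = 1) :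
    ∃ k, k * k = 1 ∧ conjHom k = g := by
  have hright : rightHom (toSemidirect g) = 1 := by
    have h : toAdd (rightHom (toSemidirect g)) + toAdd (rightHom (toSemidirect g)) = 0 := by
      rw [← toAdd_mul, ← map_mul, ← map_mul, hg, map_one, map_one, toAdd_one]
    exact toAdd.injective (by rw [toAdd_one]; omega)
  obtain ⟨k, hk⟩ : toSemidirect g ∈ (inl : FreeProdC2 ℤ →* S).range := by
    rwa [range_inl_eq_ker_rightHom, MonoidHom.mem_ker]
  have hkg : conjHom k = g := by
    rw [← ofSemidirect_toSemidirect g, ← hk, ofSemidirect, lift_inl]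
  refine ⟨k, conjHom_injective ?_, hkg⟩
  rw [map_mul, hkg, hg, map_one]

theorem map_conjHom_eq_conjHom_orbitHom {φ : G →* G} (hφa : φ a = a) {k : FreeProdC2 ℤ}
    (hk : k * k = 1) (hkv : conjHom k = φ v) (x : FreeProdC2 ℤ) :
    φ (conjHom x) = conjHom (orbitHom k hk x) := by
  suffices φ.comp conjHom = conjHom.comp (orbitHom k hk) from DFunLike.congr_fun this x
  refine hom_ext fun m => ?_
  have hshift := DFunLike.congr_fun (conjHom_comp_shift (ofAdd m)) k
  simp only [MonoidHom.comp_apply, MulEquiv.coe_toMonoidHom, MulAut.conj_apply,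
    zpowersHom_apply, toAdd_ofAdd] at hshift
  simp only [MonoidHom.comp_apply, conjHom_gen, orbitHom_gen, hshift, conjV, map_mul, map_zpow,
    map_inv, hφa, hkv, zpow_neg]

end IntCoprodC2

open FreeProdC2 IntCoprodC2 in
/-- In G = ℤ ∗ ℤ/2ℤ with A generating the ℤ factor and V the ℤ/2ℤ factor,
any automorphism fixing A sends V to A^n V A^{-n} for some n. -/
theorem stmt_9
    (A : Monoid.Coprod (Multiplicative ℤ) (Multiplicative (ZMod 2)))
    (V : Monoid.Coprod (Multiplicative ℤ) (Multiplicative (ZMod 2)))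
    (hA : A = Monoid.Coprod.inl (Multiplicative.ofAdd (1 : ℤ)))
    (hV : V = Monoid.Coprod.inr (Multiplicative.ofAdd (1 : ZMod 2)))
    (φ : Monoid.Coprod (Multiplicative ℤ) (Multiplicative (ZMod 2)) ≃*
         Monoid.Coprod (Multiplicative ℤ) (Multiplicative (ZMod 2)))
    (hφA : φ A = A) :
    ∃ n : ℤ, φ V = A ^ n * V * A ^ (-n) := by
  subst hA hV
  obtain ⟨k, hk, hkv⟩ := exists_conjHom_eq_of_mul_self (g := φ v)
    (by rw [← map_mul, v_mul_self, map_one])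
  obtain ⟨y, -, hyv⟩ := exists_conjHom_eq_of_mul_self (g := φ.symm v)
    (by rw [← map_mul, v_mul_self, map_one])
  have hy : orbitHom k hk y = gen 0 := conjHom_injective <| by
    rw [← map_conjHom_eq_conjHom_orbitHom (φ := φ.toMonoidHom) hφA hk hkv, hyv]
    simp [conjV]
  obtain ⟨n, rfl⟩ := exists_eq_gen_of_orbitHom_eq_gen k hk hy
  exact ⟨n, hkv.symm.trans (conjHom_gen n)⟩
end

section
/- Let G be a group with elements t₁, t₂, u₁, u₂ satisfying: (1) t₂t₁t₂ = t₁t₂t₁, (2) u₂u₁u₂ = u₁u₂u₁, (3) u₂u₁t₂ = t₁u₂u₁, (4) t₂u₁u₂ = u₁u₂t₁, (5) uᵢtᵢuᵢ^{-1} = tᵢ^{-1} for i = 1,2, and (6) u₂t₁t₂u₁ = t₁t₂. Then the element v := t₂t₁t₂u₁u₂u₁ satisfies v t₁ v^{-1} = t₁^{-1} and v t₂ v^{-1} = t₂^{-1}. -/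
/-!
Write `Δ = t₂t₁t₂ = t₁t₂t₁` and `w = u₁u₂u₁ = u₂u₁u₂`, so that `v = Δ w`. The braid relation
makes conjugation by `Δ` swap `t₁` and `t₂`, while relations (3), (4) and (5) make conjugation
by `w` send `t₁ ↦ t₂⁻¹` and `t₂ ↦ t₁⁻¹`. Composing, `v` sends each `tᵢ` to `tᵢ⁻¹`.
-/

namespace SemiconjBy

variable {G : Type*} [Group G] {a b : G}

theorem braid_left (h : a * b * a = b * a * b) : SemiconjBy (a * b * a) a b := by
  rw [SemiconjBy, ← mul_assoc b, ← mul_assoc b, ← h]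

theorem of_conj_eq {u x y : G} (h : u * x * u⁻¹ = y) : SemiconjBy u x y :=
  mul_inv_eq_iff_eq_mul.mp h

theorem conj_eq {u x y : G} (h : SemiconjBy u x y) : u * x * u⁻¹ = y :=
  mul_inv_eq_iff_eq_mul.mpr h

end SemiconjBy

theorem stmt_13_general {G : Type*} [Group G] (t₁ t₂ u₁ u₂ : G)
    (h1 : t₂ * t₁ * t₂ = t₁ * t₂ * t₁)
    (h2 : u₂ * u₁ * u₂ = u₁ * u₂ * u₁)
    (h3 : u₂ * u₁ * t₂ = t₁ * u₂ * u₁)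
    (h4 : t₂ * u₁ * u₂ = u₁ * u₂ * t₁)
    (h5₁ : u₁ * t₁ * u₁⁻¹ = t₁⁻¹)
    (h5₂ : u₂ * t₂ * u₂⁻¹ = t₂⁻¹) :
    (t₂ * t₁ * t₂ * u₁ * u₂ * u₁) * t₁ * (t₂ * t₁ * t₂ * u₁ * u₂ * u₁)⁻¹ = t₁⁻¹ ∧
    (t₂ * t₁ * t₂ * u₁ * u₂ * u₁) * t₂ * (t₂ * t₁ * t₂ * u₁ * u₂ * u₁)⁻¹ = t₂⁻¹ := by
  have hv : t₂ * t₁ * t₂ * u₁ * u₂ * u₁ = t₂ * t₁ * t₂ * (u₁ * u₂ * u₁) := by simp only [mul_assoc]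
  have hw₁ : SemiconjBy (u₁ * u₂ * u₁) t₁ t₂⁻¹ := by
    have h : SemiconjBy (u₂ * (u₁ * u₂)) t₁ t₂⁻¹ :=
      (SemiconjBy.of_conj_eq h5₂).mul_left (by rw [SemiconjBy, ← mul_assoc, ← h4, mul_assoc])
    rwa [← mul_assoc, h2] at h
  have hw₂ : SemiconjBy (u₁ * u₂ * u₁) t₂ t₁⁻¹ := by
    have h : SemiconjBy (u₁ * (u₂ * u₁)) t₂ t₁⁻¹ :=
      (SemiconjBy.of_conj_eq h5₁).mul_left (by rw [SemiconjBy, ← mul_assoc, h3, mul_assoc])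
    rwa [← mul_assoc] at h
  have hΔ₁ : SemiconjBy (t₂ * t₁ * t₂) t₁ t₂ := by
    rw [h1]; exact SemiconjBy.braid_left h1.symm
  have hΔ₂ : SemiconjBy (t₂ * t₁ * t₂) t₂ t₁ := SemiconjBy.braid_left h1
  rw [hv]
  exact ⟨(hΔ₂.inv_right.mul_left hw₁).conj_eq, (hΔ₁.inv_right.mul_left hw₂).conj_eq⟩

/-- With the relations of Mod(N_{3,1}), v := t₂t₁t₂u₁u₂u₁ conjugates t₁ and
t₂ to their inverses. -/
theorem stmt_13 {G : Type*} [Group G] (t₁ t₂ u₁ u₂ : G)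
    (h1 : t₂ * t₁ * t₂ = t₁ * t₂ * t₁)
    (h2 : u₂ * u₁ * u₂ = u₁ * u₂ * u₁)
    (h3 : u₂ * u₁ * t₂ = t₁ * u₂ * u₁)
    (h4 : t₂ * u₁ * u₂ = u₁ * u₂ * t₁)
    (h5₁ : u₁ * t₁ * u₁⁻¹ = t₁⁻¹)
    (h5₂ : u₂ * t₂ * u₂⁻¹ = t₂⁻¹)
    (h6 : u₂ * t₁ * t₂ * u₁ = t₁ * t₂) :
    (t₂ * t₁ * t₂ * u₁ * u₂ * u₁) * t₁ * (t₂ * t₁ * t₂ * u₁ * u₂ * u₁)⁻¹ = t₁⁻¹ ∧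
    (t₂ * t₁ * t₂ * u₁ * u₂ * u₁) * t₂ * (t₂ * t₁ * t₂ * u₁ * u₂ * u₁)⁻¹ = t₂⁻¹ :=
  stmt_13_general t₁ t₂ u₁ u₂ h1 h2 h3 h4 h5₁ h5₂
end
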